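/- arXiv:2210.06064 — 5 statements merged into one kernel-verified Lean document; each statement's English description precedes it below -/
import Mathlib

section
/- Every quasi cone metric space (X,d) equipped with the forward topology T_f is a T1 space: for any two distinct points x, y there is a forward open set containing x but not y. -/
open TopologicalSpace

/-- A quasi cone metric space on `X` with values in a real Banach space `E`,
ordered by a cone `P` with nonempty interior. -/
structure QCMS (X : Type*) (E : Type*) [NormedAddCommGroup E] [NormedSpace ℝ E] : Type _ where
  P : Set E
  P_closed : IsClosed P
  P_ne : P ≠ {0}
  P_nonempty : P.Nonempty
  P_smul_add : ∀ ⦃x⦄, x ∈ P → ∀ ⦃y⦄, y ∈ P → ∀ s t : ℝ, 0 ≤ s → 0 ≤ t → s • x + t • y ∈ P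
  P_eq_zero : ∀ x, x ∈ P → -x ∈ P → x = 0
  P_int : (interior P).Nonempty
  d : X → X → E
  d_mem : ∀ x y, d x y ∈ P
  d_eq_zero_iff : ∀ x y, d x y = 0 ↔ x = y
  triangle : ∀ x y z, d x z + d z y - d x y ∈ P

namespace QCMS

variable {X E : Type*} [NormedAddCommGroup E] [NormedSpace ℝ E]

/-- `a ≪ b` : `b - a` lies in the interior of the cone. -/
def lt' (Q : QCMS X E) (a b : E) : Prop := b - a ∈ interior Q.P

/-- Forward open ball. -/
def ballF (Q : QCMS X E) (x : X) (u : E) : Set X := {y | Q.lt' (Q.d x y) u}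

/-- Backward open ball. -/
def ballB (Q : QCMS X E) (x : X) (u : E) : Set X := {y | Q.lt' (Q.d y x) u}

/-- The forward topology, generated by forward open balls. -/
def Tf (Q : QCMS X E) : TopologicalSpace X :=
  generateFrom {s | ∃ x u, u ∈ interior Q.P ∧ s = Q.ballF x u}

/-- The backward topology, generated by backward open balls. -/
def Tb (Q : QCMS X E) : TopologicalSpace X :=
  generateFrom {s | ∃ x u, u ∈ interior Q.P ∧ s = Q.ballB x u}

/-- Forward convergence of a sequence. -/
def FConv (Q : QCMS X E) (x : ℕ → X) (a : X) : Prop :=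
  ∀ u ∈ interior Q.P, ∃ N, ∀ n ≥ N, Q.lt' (Q.d a (x n)) u

/-- Backward convergence of a sequence. -/
def BConv (Q : QCMS X E) (x : ℕ → X) (a : X) : Prop :=
  ∀ u ∈ interior Q.P, ∃ N, ∀ n ≥ N, Q.lt' (Q.d (x n) a) u

/-- Forward Cauchy sequence. -/
def FCauchy (Q : QCMS X E) (x : ℕ → X) : Prop :=
  ∀ u ∈ interior Q.P, ∃ N, ∀ m n, N ≤ m → m ≤ n → Q.lt' (Q.d (x m) (x n)) u

/-- Forward sequential compactness of the whole space. -/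
def FSeqCompact (Q : QCMS X E) : Prop :=
  ∀ x : ℕ → X, ∃ (a : X) (φ : ℕ → ℕ), StrictMono φ ∧ Q.FConv (x ∘ φ) a

/-- Forward total boundedness of the whole space. -/
def FTotallyBounded (Q : QCMS X E) : Prop :=
  ∀ u ∈ interior Q.P, ∃ t : Finset X, ∀ y : X, ∃ c ∈ t, y ∈ Q.ballF c u

/-- Forward completeness. -/
def FComplete (Q : QCMS X E) : Prop :=
  ∀ x : ℕ → X, Q.FCauchy x → ∃ a, Q.FConv x a

end QCMS

/-- the forward topology is T1. -/
theorem forward_topology_t1 {X E : Type*} [NormedAddCommGroup E] [NormedSpace ℝ E]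
    (Q : QCMS X E) :
    ∀ x y : X, x ≠ y → ∃ s : Set X, @IsOpen X Q.Tf s ∧ x ∈ s ∧ y ∉ s := by
  intro x y hxy
  -- smul stability of P
  have hsmulP : ∀ (t : ℝ), 0 ≤ t → ∀ z ∈ Q.P, t • z ∈ Q.P := by
    intro t ht z hz
    obtain ⟨w, hw⟩ := Q.P_nonempty
    have := Q.P_smul_add hz hw t 0 ht le_rfl
    simpa using this
  -- smul stability of interior P for positive scalars
  have hsmulInt : ∀ (t : ℝ), 0 < t → ∀ z ∈ interior Q.P, t • z ∈ interior Q.P := by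
    intro t ht z hz
    have hmap : IsOpenMap (fun w : E => t • w) := isOpenMap_smul₀ (ne_of_gt ht)
    have hopen : IsOpen ((fun w : E => t • w) '' interior Q.P) :=
      hmap _ isOpen_interior
    have hsub : (fun w : E => t • w) '' interior Q.P ⊆ Q.P := by
      rintro _ ⟨a, ha, rfl⟩
      exact hsmulP t ht.le a (interior_subset ha)
    have : t • z ∈ (fun w : E => t • w) '' interior Q.P := ⟨z, hz, rfl⟩
    exact interior_maximal hsub hopen this
  set c := Q.d x y with hc
  have hcne : c ≠ 0 := fun h => hxy ((Q.d_eq_zero_iff x y).1 h)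
  -- find u ∈ interior P with ¬ c ≪ u
  by_cases hforall : ∀ u ∈ interior Q.P, u - c ∈ interior Q.P
  · exfalso
    obtain ⟨e, he⟩ := Q.P_int
    have hmem : ∀ n : ℕ, ((1:ℝ)/(n+1)) • e - c ∈ Q.P := by
      intro n
      have hpos : (0:ℝ) < 1/(n+1) := by positivity
      exact interior_subset (hforall _ (hsmulInt _ hpos e he))
    have htend : Filter.Tendsto (fun n : ℕ => ((1:ℝ)/(n+1)) • e - c)
        Filter.atTop (nhds (-c)) := by
      have h1 : Filter.Tendsto (fun n : ℕ => ((1:ℝ)/(n+1))) Filter.atTop (nhds 0) :=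
        tendsto_one_div_add_atTop_nhds_zero_nat
      have h2 : Filter.Tendsto (fun n : ℕ => ((1:ℝ)/(n+1)) • e) Filter.atTop
          (nhds ((0:ℝ) • e)) := h1.smul_const e
      simpa using h2.sub_const c
    have hneg : -c ∈ Q.P :=
      Q.P_closed.mem_of_tendsto htend (Filter.Eventually.of_forall hmem)
    exact hcne (Q.P_eq_zero c (Q.d_mem x y) hneg)
  · push_neg at hforall
    obtain ⟨u, hu, hnc⟩ := hforall
    refine ⟨Q.ballF x u, ?_, ?_, ?_⟩
    · exact TopologicalSpace.GenerateOpen.basic _ ⟨x, u, hu, rfl⟩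
    · show Q.lt' (Q.d x x) u
      have : Q.d x x = 0 := (Q.d_eq_zero_iff x x).2 rfl
      simp [QCMS.lt', this, hu]
    · intro hy
      exact hnc hy
end

section
/- Let (X,d) be a quasi cone metric space in which every forward convergent sequence is also backward convergent (to the same limit). Then the forward topology T_f on X is Hausdorff. -/
open TopologicalSpace

namespace QCMS

open Filter Topology

variable {X E : Type*} [NormedAddCommGroup E] [NormedSpace ℝ E] (Q : QCMS X E)

theorem add_mem {a b : E} (ha : a ∈ Q.P) (hb : b ∈ Q.P) : a + b ∈ Q.P := by
  simpa using Q.P_smul_add ha hb 1 1 zero_le_one zero_le_one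

theorem add_mem_interior {a b : E} (ha : a ∈ interior Q.P) (hb : b ∈ Q.P) :
    a + b ∈ interior Q.P := by
  refine interior_maximal ?_ (isOpen_interior.add_right (t := {b})) (Set.add_mem_add ha rfl)
  rintro _ ⟨c, hc, _, rfl, rfl⟩
  exact Q.add_mem (interior_subset hc) hb

theorem smul_mem_interior {a : E} {t : ℝ} (ht : 0 < t) (ha : a ∈ interior Q.P) :
    t • a ∈ interior Q.P := by
  refine interior_maximal ?_ (isOpen_interior.smul₀ ht.ne') (Set.smul_mem_smul_set ha)
  rintro _ ⟨c, hc, rfl⟩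
  simpa using Q.P_smul_add (interior_subset hc) (interior_subset hc) t 0 ht.le le_rfl

theorem lt'_of_sub_mem_of_lt' {a b c : E} (hab : b - a ∈ Q.P) (hbc : Q.lt' b c) :
    Q.lt' a c := by
  simpa [lt'] using Q.add_mem_interior hbc hab

theorem lt'_trans {a b c : E} (hab : Q.lt' a b) (hbc : Q.lt' b c) : Q.lt' a c :=
  Q.lt'_of_sub_mem_of_lt' (interior_subset hab) hbc

theorem add_lt'_add {a b c e : E} (hab : Q.lt' a b) (hce : Q.lt' c e) :
    Q.lt' (a + c) (b + e) := by
  have := Q.add_mem_interior hab (interior_subset hce)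
  rwa [lt', add_sub_add_comm]

theorem exists_seq_mem_interior_tendsto_zero :
    ∃ u : ℕ → E, (∀ n, u n ∈ interior Q.P) ∧ Tendsto u atTop (𝓝 0) := by
  obtain ⟨e, he⟩ := Q.P_int
  refine ⟨fun n => (1 / ((n : ℝ) + 1)) • e, fun n => Q.smul_mem_interior (by positivity) he, ?_⟩
  simpa using (tendsto_one_div_add_atTop_nhds_zero_nat (𝕜 := ℝ)).smul_const e

theorem eventually_lt'_of_tendsto_zero {u : ℕ → E} (hu : Tendsto u atTop (𝓝 0)) {v : E}
    (hv : v ∈ interior Q.P) : ∀ᶠ n in atTop, Q.lt' (u n) v := by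
  have : Tendsto (fun n => v - u n) atTop (𝓝 v) := by
    simpa using tendsto_const_nhds.sub hu
  exact this.eventually (isOpen_interior.mem_nhds hv)

theorem neg_mem_of_forall_lt' {a : E} (ha : ∀ v ∈ interior Q.P, Q.lt' a v) : -a ∈ Q.P := by
  obtain ⟨u, hu, hu0⟩ := Q.exists_seq_mem_interior_tendsto_zero
  have : Tendsto (fun n => u n - a) atTop (𝓝 (0 - a)) := hu0.sub tendsto_const_nhds
  simpa using Q.P_closed.mem_of_tendsto this
    (Eventually.of_forall fun n => interior_subset (ha _ (hu n)))

theorem d_self (x : X) : Q.d x x = 0 :=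
  (Q.d_eq_zero_iff x x).mpr rfl

theorem eq_of_forall_d_lt' {x y : X} (hxy : ∀ v ∈ interior Q.P, Q.lt' (Q.d x y) v) : x = y :=
  (Q.d_eq_zero_iff x y).mp (Q.P_eq_zero _ (Q.d_mem x y) (Q.neg_mem_of_forall_lt' hxy))

theorem mem_ballF_self (x : X) {u : E} (hu : u ∈ interior Q.P) : x ∈ Q.ballF x u := by
  simpa [ballF, lt', Q.d_self] using hu

theorem isOpen_ballF (x : X) {u : E} (hu : u ∈ interior Q.P) : IsOpen[Q.Tf] (Q.ballF x u) :=
  isOpen_generateFrom_of_mem ⟨x, u, hu, rfl⟩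

theorem fConv_of_mem_ballF {u : ℕ → E} (hu : Tendsto u atTop (𝓝 0)) {z : ℕ → X} {a : X}
    (hz : ∀ n, z n ∈ Q.ballF a (u n)) : Q.FConv z a := fun _ hv =>
  eventually_atTop.mp <| (Q.eventually_lt'_of_tendsto_zero hu hv).mono fun n hn =>
    Q.lt'_trans (hz n) hn

theorem d_lt'_of_fConv_of_bConv {z : ℕ → X} {x y : X} (hx : Q.FConv z x) (hy : Q.BConv z y) :
    ∀ v ∈ interior Q.P, Q.lt' (Q.d x y) v := by
  intro v hv
  have hhalf : (1 / 2 : ℝ) • v ∈ interior Q.P := Q.smul_mem_interior (by norm_num) hv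
  obtain ⟨N₁, hN₁⟩ := hx _ hhalf
  obtain ⟨N₂, hN₂⟩ := hy _ hhalf
  set n := max N₁ N₂
  have hsum := Q.add_lt'_add (hN₁ n (le_max_left _ _)) (hN₂ n (le_max_right _ _))
  rw [← add_smul, show (1 / 2 + 1 / 2 : ℝ) = 1 by norm_num, one_smul] at hsum
  exact Q.lt'_of_sub_mem_of_lt' (Q.triangle _ _ _) hsum

/-- Points `z n` of the intersections for radii tending to `0` forward converge to both `x`
and `y`, hence backward converge to `y`; the triangle inequality through `z n` then makes
`d x y` arbitrarily small in the cone order. -/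
theorem eq_of_forall_ballF_inter_nonempty (h : ∀ (z : ℕ → X) (a : X), Q.FConv z a → Q.BConv z a)
    {x y : X} (hxy : ∀ u ∈ interior Q.P, (Q.ballF x u ∩ Q.ballF y u).Nonempty) : x = y := by
  obtain ⟨u, hu, hu0⟩ := Q.exists_seq_mem_interior_tendsto_zero
  choose z hz using fun n => hxy (u n) (hu n)
  have hzx : Q.FConv z x := Q.fConv_of_mem_ballF hu0 fun n => (hz n).1
  have hzy : Q.FConv z y := Q.fConv_of_mem_ballF hu0 fun n => (hz n).2
  exact Q.eq_of_forall_d_lt' (Q.d_lt'_of_fConv_of_bConv hzx (h z y hzy))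

end QCMS

/-- if forward convergence implies backward convergence,
the forward topology is Hausdorff. -/
theorem forward_topology_t2 {X E : Type*} [NormedAddCommGroup E] [NormedSpace ℝ E]
    (Q : QCMS X E) (h : ∀ (x : ℕ → X) (a : X), Q.FConv x a → Q.BConv x a) :
    @T2Space X Q.Tf := by
  refine @T2Space.mk X Q.Tf fun x y hxy => ?_
  by_contra! hsep
  refine hxy (Q.eq_of_forall_ballF_inter_nonempty h fun u hu => ?_)
  rw [← Set.not_disjoint_iff_nonempty_inter]
  exact hsep _ _ (Q.isOpen_ballF x hu) (Q.isOpen_ballF y hu) (Q.mem_ballF_self x hu)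
    (Q.mem_ballF_self y hu)
end

section
/- Let (X,d) be a quasi cone metric space with forward topology T_f. If X is forward sequentially compact and forward totally bounded, then X is forward compact (every open cover of X in T_f has a finite subcover). -/
open TopologicalSpace

section Aux

variable {X E : Type*} [NormedAddCommGroup E] [NormedSpace ℝ E]

lemma QCMS.add_memP (Q : QCMS X E) {x y : E} (hx : x ∈ Q.P) (hy : y ∈ Q.P) :
    x + y ∈ Q.P := by
  have := Q.P_smul_add hx hy 1 1 zero_le_one zero_le_one
  simpa using this

lemma QCMS.smul_memP (Q : QCMS X E) {x : E} (hx : x ∈ Q.P) {t : ℝ} (ht : 0 ≤ t) :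
    t • x ∈ Q.P := by
  have := Q.P_smul_add hx hx t 0 ht le_rfl
  simpa using this

lemma QCMS.int_add_mem (Q : QCMS X E) {x y : E} (hx : x ∈ interior Q.P) (hy : y ∈ Q.P) :
    x + y ∈ interior Q.P := by
  have hsub : (· + y) '' interior Q.P ⊆ Q.P := by
    rintro _ ⟨z, hz, rfl⟩
    exact Q.add_memP (interior_subset hz) hy
  have hopen : IsOpen ((· + y) '' interior Q.P) :=
    (isOpenMap_add_right y) _ isOpen_interior
  exact interior_maximal hsub hopen ⟨x, hx, rfl⟩

lemma QCMS.int_add_int (Q : QCMS X E) {x y : E} (hx : x ∈ interior Q.P)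
    (hy : y ∈ interior Q.P) : x + y ∈ interior Q.P :=
  Q.int_add_mem hx (interior_subset hy)

lemma QCMS.smul_int (Q : QCMS X E) {x : E} (hx : x ∈ interior Q.P) {t : ℝ} (ht : 0 < t) :
    t • x ∈ interior Q.P := by
  have hsub : (t • ·) '' interior Q.P ⊆ Q.P := by
    rintro _ ⟨z, hz, rfl⟩
    exact Q.smul_memP (interior_subset hz) ht.le
  have hopen : IsOpen ((t • ·) '' interior Q.P) :=
    (isOpenMap_smul₀ ht.ne') _ isOpen_interior
  exact interior_maximal hsub hopen ⟨x, hx, rfl⟩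

lemma QCMS.lt'_of_le (Q : QCMS X E) {c v v' : E} (h : Q.lt' c v) (h' : v' - v ∈ Q.P) :
    Q.lt' c v' := by
  have h2 := Q.int_add_mem h h'
  have heq : (v - c) + (v' - v) = v' - c := by abel
  rwa [heq] at h2

/-- Every `Tf`-open set contains a forward ball around each of its points. -/
lemma QCMS.exists_ballF_subset (Q : QCMS X E) {s : Set X} (hs : @IsOpen X Q.Tf s) :
    ∀ a ∈ s, ∃ v ∈ interior Q.P, Q.ballF a v ⊆ s := by
  have hs' : TopologicalSpace.GenerateOpen
      {s | ∃ x u, u ∈ interior Q.P ∧ s = Q.ballF x u} s := hs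
  clear hs
  induction hs' with
  | basic t ht =>
    obtain ⟨x, u, hu, rfl⟩ := ht
    intro a ha
    refine ⟨u - Q.d x a, ha, ?_⟩
    intro y hy
    have htr : Q.d x a + Q.d a y - Q.d x y ∈ Q.P := Q.triangle x y a
    have h2 := Q.int_add_mem hy htr
    have heq : ((u - Q.d x a) - Q.d a y) + (Q.d x a + Q.d a y - Q.d x y)
        = u - Q.d x y := by abel
    rw [heq] at h2
    exact h2
  | univ =>
    intro a _
    obtain ⟨u0, hu0⟩ := Q.P_int
    exact ⟨u0, hu0, Set.subset_univ _⟩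
  | inter s t _ _ ihs iht =>
    intro a ha
    obtain ⟨v1, hv1, hb1⟩ := ihs a ha.1
    obtain ⟨v2, hv2, hb2⟩ := iht a ha.2
    obtain ⟨ε, hε, hball⟩ := Metric.isOpen_iff.1 isOpen_interior v2 hv2
    set r : ℝ := min (1/2 : ℝ) (ε / (2 * (‖v1‖ + 1))) with hr
    have hv1norm : (0:ℝ) < ‖v1‖ + 1 := by positivity
    have hrpos : 0 < r := lt_min (by norm_num) (by positivity)
    have hrle : r ≤ 1/2 := min_le_left _ _
    have hsmall : ‖r • v1‖ < ε := by
      rw [norm_smul, Real.norm_eq_abs, abs_of_pos hrpos]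
      calc r * ‖v1‖ ≤ (ε / (2 * (‖v1‖ + 1))) * ‖v1‖ := by
            apply mul_le_mul_of_nonneg_right (min_le_right _ _) (norm_nonneg _)
        _ < (ε / (2 * (‖v1‖ + 1))) * (2 * (‖v1‖ + 1)) := by
            apply mul_lt_mul_of_pos_left _ (by positivity)
            nlinarith [norm_nonneg v1]
        _ = ε := by field_simp
    refine ⟨r • v1, Q.smul_int hv1 hrpos, ?_⟩
    have hle1 : v1 - r • v1 ∈ Q.P := by
      have : v1 - r • v1 = (1 - r) • v1 := by
        rw [sub_smul, one_smul]
      rw [this]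
      exact Q.smul_memP (interior_subset hv1) (by linarith)
    have hle2 : v2 - r • v1 ∈ Q.P := by
      apply interior_subset
      apply hball
      rw [Metric.mem_ball, dist_eq_norm]
      simpa using hsmall
    intro y hy
    exact ⟨hb1 (Q.lt'_of_le hy hle1), hb2 (Q.lt'_of_le hy hle2)⟩
  | sUnion S _ ih =>
    intro a ha
    obtain ⟨t, htS, hat⟩ := ha
    obtain ⟨v, hv, hb⟩ := ih t htS a hat
    exact ⟨v, hv, hb.trans (Set.subset_sUnion_of_mem htS)⟩

end Aux

/-- forward sequentially compact + forward totally bounded ⇒ forward compact. -/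
theorem forward_compact_of_seqCompact_totallyBounded {X E : Type*} [NormedAddCommGroup E]
    [NormedSpace ℝ E] (Q : QCMS X E)
    (h1 : Q.FSeqCompact) (h2 : Q.FTotallyBounded) :
    @CompactSpace X Q.Tf := by
  classical
  letI := Q.Tf
  rw [← isCompact_univ_iff]
  apply isCompact_of_finite_subcover
  intro ι U hU hcov
  by_contra hnc
  push_neg at hnc
  obtain ⟨u0, hu0⟩ := Q.P_int
  -- radii
  set u : ℕ → E := fun n => ((n:ℝ) + 1)⁻¹ • u0 with hu_def
  have hupos : ∀ n : ℕ, (0:ℝ) < (n:ℝ) + 1 := fun n => by positivity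
  have huint : ∀ n, u n ∈ interior Q.P := fun n =>
    Q.smul_int hu0 (inv_pos.2 (hupos n))
  -- for each n pick a ball with no finite subcover
  have key : ∀ n : ℕ, ∃ c : X, ¬ ∃ t : Finset ι, Q.ballF c (u n) ⊆ ⋃ i ∈ t, U i := by
    intro n
    by_contra hcontra
    push_neg at hcontra
    obtain ⟨t, ht⟩ := h2 (u n) (huint n)
    choose f hf using hcontra
    apply hnc (t.biUnion f)
    intro x _
    obtain ⟨c, hct, hxc⟩ := ht x
    have := hf c hxc
    rw [Set.mem_iUnion₂] at this ⊢
    obtain ⟨i, hi, hxi⟩ := this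
    exact ⟨i, Finset.mem_biUnion.2 ⟨c, hct, hi⟩, hxi⟩
  choose c hc using key
  obtain ⟨a, φ, hφ, hconv⟩ := h1 c
  have ha : a ∈ ⋃ i, U i := hcov (Set.mem_univ a)
  obtain ⟨i0, hai0⟩ := Set.mem_iUnion.1 ha
  obtain ⟨v, hv, hball⟩ := Q.exists_ballF_subset (hU i0) a hai0
  have hv2 : (1/2 : ℝ) • v ∈ interior Q.P := Q.smul_int hv (by norm_num)
  obtain ⟨N, hN⟩ := hconv ((1/2 : ℝ) • v) hv2
  -- find M with u n small for n ≥ M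
  obtain ⟨ε, hε, hballε⟩ := Metric.isOpen_iff.1 isOpen_interior _ hv2
  obtain ⟨M, hM⟩ := exists_nat_gt (‖u0‖ / ε)
  have hsmall : ∀ n : ℕ, M ≤ n → ‖u n‖ < ε := by
    intro n hn
    have h1' : ‖u0‖ / ε < (n:ℝ) + 1 := by
      have : (M:ℝ) ≤ (n:ℝ) := by exact_mod_cast hn
      linarith
    have h2' : ‖u0‖ < ((n:ℝ) + 1) * ε := by
      rwa [div_lt_iff₀ hε] at h1'
    rw [hu_def]
    simp only [norm_smul, norm_inv, Real.norm_eq_abs, abs_of_pos (hupos n)]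
    rw [inv_mul_lt_iff₀ (hupos n)]
    exact h2'
  set k := max N M with hk
  set n := φ k with hn
  have hkn : k ≤ n := hφ.le_apply
  have hA : Q.lt' (Q.d a (c n)) ((1/2 : ℝ) • v) := hN k (le_max_left _ _)
  have hB : (1/2 : ℝ) • v - u n ∈ interior Q.P := by
    apply hballε
    rw [Metric.mem_ball, dist_eq_norm]
    have : (1/2 : ℝ) • v - u n - (1/2 : ℝ) • v = -(u n) := by abel
    rw [this, norm_neg]
    exact hsmall n (le_trans (le_max_right _ _) hkn)
  -- the chosen ball is inside U i0
  apply hc n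
  refine ⟨{i0}, ?_⟩
  intro y hy
  have hy' : u n - Q.d (c n) y ∈ interior Q.P := hy
  have htr : Q.d a (c n) + Q.d (c n) y - Q.d a y ∈ Q.P := Q.triangle a y (c n)
  have hsum : ((1/2 : ℝ) • v - Q.d a (c n)) + ((1/2 : ℝ) • v - u n)
      + (u n - Q.d (c n) y) + (Q.d a (c n) + Q.d (c n) y - Q.d a y)
      ∈ interior Q.P :=
    Q.int_add_mem (Q.int_add_int (Q.int_add_int hA hB) hy') htr
  have hhalf : (1/2 : ℝ) • v + (1/2 : ℝ) • v = v := by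
    rw [← add_smul]; norm_num
  have heq : ((1/2 : ℝ) • v - Q.d a (c n)) + ((1/2 : ℝ) • v - u n)
      + (u n - Q.d (c n) y) + (Q.d a (c n) + Q.d (c n) y - Q.d a y)
      = ((1/2 : ℝ) • v + (1/2 : ℝ) • v) - Q.d a y := by abel
  rw [heq, hhalf] at hsum
  have : y ∈ Q.ballF a v := hsum
  simpa using hball this
end

section
/- Let (X,d) be a quasi cone metric space in which forward convergence implies backward convergence. If X is forward sequentially compact, then X is forward totally bounded. -/
open TopologicalSpace

namespace QCMS

variable {X E : Type*} [NormedAddCommGroup E] [NormedSpace ℝ E]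

lemma mem_P_add (Q : QCMS X E) {a b : E} (ha : a ∈ Q.P) (hb : b ∈ Q.P) :
    a + b ∈ Q.P := by
  have := Q.P_smul_add ha hb 1 1 zero_le_one zero_le_one
  simpa using this

lemma int_add_P (Q : QCMS X E) {u p : E} (hu : u ∈ interior Q.P) (hp : p ∈ Q.P) :
    u + p ∈ interior Q.P := by
  have hopen : IsOpen ((· + p) '' interior Q.P) :=
    (Homeomorph.addRight p).isOpenMap _ isOpen_interior
  have hsub : (· + p) '' interior Q.P ⊆ Q.P := by
    rintro _ ⟨q, hq, rfl⟩
    exact Q.mem_P_add (interior_subset hq) hp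
  exact interior_maximal hsub hopen ⟨u, hu, rfl⟩

lemma int_smul (Q : QCMS X E) {u : E} (hu : u ∈ interior Q.P) {t : ℝ} (ht : 0 < t) :
    t • u ∈ interior Q.P := by
  have hopen : IsOpen ((t • ·) '' interior Q.P) :=
    (Homeomorph.smulOfNeZero t ht.ne').isOpenMap _ isOpen_interior
  have hsub : (t • ·) '' interior Q.P ⊆ Q.P := by
    rintro _ ⟨q, hq, rfl⟩
    have := Q.P_smul_add (interior_subset hq) (interior_subset hq) t 0 ht.le le_rfl
    simpa using this
  exact interior_maximal hsub hopen ⟨u, hu, rfl⟩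

end QCMS

/-- if forward convergence implies backward convergence, then forward
sequential compactness implies forward total boundedness. -/
theorem forward_totallyBounded_of_seqCompact {X E : Type*} [NormedAddCommGroup E]
    [NormedSpace ℝ E] (Q : QCMS X E)
    (h : ∀ (x : ℕ → X) (a : X), Q.FConv x a → Q.BConv x a)
    (hsc : Q.FSeqCompact) :
    Q.FTotallyBounded := by
  classical
  intro u hu
  by_contra hcon
  push_neg at hcon
  obtain ⟨u, hu, hcov⟩ : ∃ u ∈ interior Q.P, ∀ t : Finset X, ∃ y : X, ∀ c ∈ t, y ∉ Q.ballF c u :=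
    ⟨u, hu, fun t => by
      obtain ⟨y, hy⟩ := hcon t
      exact ⟨y, fun c hc hmem => hy c hc hmem⟩⟩
  choose g hg using hcov
  -- build the sequence
  let seq : ℕ → List X := fun n => Nat.rec [] (fun _ l => l ++ [g l.toFinset]) n
  let f : ℕ → X := fun n => g (seq n).toFinset
  have hseq_succ : ∀ n, seq (n + 1) = seq n ++ [f n] := fun n => rfl
  have hmem : ∀ i n, i < n → f i ∈ seq n := by
    intro i n hin
    induction n with
    | zero => omega
    | succ n ih =>
      rw [hseq_succ]
      rcases Nat.lt_succ_iff_lt_or_eq.mp hin with h' | h'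
      · exact List.mem_append_left _ (ih h')
      · subst h'; exact List.mem_append_right _ (List.mem_singleton_self _)
  have hsep : ∀ i n, i < n → ¬ Q.lt' (Q.d (f i) (f n)) u := by
    intro i n hin hlt
    exact hg (seq n).toFinset (f i) (List.mem_toFinset.mpr (hmem i n hin)) hlt
  obtain ⟨a, φ, hφ, hconv⟩ := hsc f
  have hbconv := h _ a hconv
  have hu2 : (1/2 : ℝ) • u ∈ interior Q.P := Q.int_smul hu (by norm_num)
  obtain ⟨N1, hN1⟩ := hconv _ hu2
  obtain ⟨N2, hN2⟩ := hbconv _ hu2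
  set m := max N1 N2 with hm
  have h1 : Q.lt' (Q.d a (f (φ (m + 1)))) ((1/2 : ℝ) • u) :=
    hN1 (m + 1) (le_trans (le_max_left _ _) (Nat.le_succ _))
  have h2 : Q.lt' (Q.d (f (φ m)) a) ((1/2 : ℝ) • u) :=
    hN2 m (le_max_right _ _)
  have hlt : Q.lt' (Q.d (f (φ m)) (f (φ (m + 1)))) u := by
    have htri := Q.triangle (f (φ m)) (f (φ (m + 1))) a
    have key : u - Q.d (f (φ m)) (f (φ (m + 1))) =
        (((1/2 : ℝ) • u - Q.d (f (φ m)) a) + ((1/2 : ℝ) • u - Q.d a (f (φ (m + 1)))))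
          + (Q.d (f (φ m)) a + Q.d a (f (φ (m + 1))) - Q.d (f (φ m)) (f (φ (m + 1)))) := by
      set v := (1/2 : ℝ) • u with hv
      have hvv : v + v = u := by rw [hv, ← add_smul]; norm_num
      rw [← hvv]; abel
    have hadd : ((1/2 : ℝ) • u - Q.d (f (φ m)) a) + ((1/2 : ℝ) • u - Q.d a (f (φ (m + 1))))
        ∈ interior Q.P := Q.int_add_P h2 (interior_subset h1)
    show u - Q.d (f (φ m)) (f (φ (m + 1))) ∈ interior Q.P
    rw [key]
    exact Q.int_add_P hadd htri
  exact hsep (φ m) (φ (m + 1)) (hφ (Nat.lt_succ_self m)) hlt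
end

section
/- Let (X,d) be a forward sequentially compact quasi cone metric space. Then every backward convergent sequence in X is also forward convergent to the same limit. -/
/-!
If `x n` converges backward to `a` but not forward, some subsequence stays outside a forward
ball `{y | d a y ≪ u}`. Forward sequential compactness gives a further subsequence converging
forward to some `b`. Since it still converges backward to `a`, the triangle inequality through its
terms gives `d b a ≪ u` for every interior `u`; as the cone is closed and pointed this forces
`d b a = 0`, so `b = a`, and the subsequence eventually enters the forward ball after all.
-/

open TopologicalSpace

open Filter Topology

namespace QCMS

variable {X E : Type*} [NormedAddCommGroup E] [NormedSpace ℝ E]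

lemma add_mem_s15 (Q : QCMS X E) {p q : E} (hp : p ∈ Q.P) (hq : q ∈ Q.P) : p + q ∈ Q.P := by
  simpa using Q.P_smul_add hp hq 1 1 zero_le_one zero_le_one

lemma add_mem_interior_s15 (Q : QCMS X E) {p q : E} (hp : p ∈ Q.P) (hq : q ∈ interior Q.P) :
    p + q ∈ interior Q.P := by
  refine interior_maximal ?_ ((isOpenMap_add_left p) _ isOpen_interior) ⟨q, hq, rfl⟩
  rintro _ ⟨y, hy, rfl⟩
  exact Q.add_mem_s15 hp (interior_subset hy)

lemma smul_mem_interior_s15 (Q : QCMS X E) {u : E} (hu : u ∈ interior Q.P) {c : ℝ} (hc : 0 < c) :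
    c • u ∈ interior Q.P := by
  refine interior_maximal ?_ ((isOpenMap_smul₀ hc.ne') _ isOpen_interior) ⟨u, hu, rfl⟩
  rintro _ ⟨y, hy, rfl⟩
  simpa using Q.P_smul_add (interior_subset hy) (interior_subset hy) c 0 hc.le le_rfl

lemma lt'_add_of_triangle (Q : QCMS X E) {x y z : X} {u v : E}
    (hxz : Q.lt' (Q.d x z) u) (hzy : Q.lt' (Q.d z y) v) : Q.lt' (Q.d x y) (u + v) := by
  have hsum :=
    Q.add_mem_interior_s15 (Q.triangle x y z) (Q.add_mem_interior_s15 (interior_subset hxz) hzy)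
  unfold lt'
  convert hsum using 1
  abel

/-- Let `t ↓ 0` in `t • u₀ - p ∈ P` and use that `P` is closed. -/
lemma neg_mem_of_forall_lt'_s15 (Q : QCMS X E) {p : E} (hp : ∀ u ∈ interior Q.P, Q.lt' p u) :
    -p ∈ Q.P := by
  obtain ⟨u₀, hu₀⟩ := Q.P_int
  have hmem : ∀ n : ℕ, (1 / ((n : ℝ) + 1)) • u₀ - p ∈ Q.P := fun n =>
    interior_subset (hp _ (Q.smul_mem_interior_s15 hu₀ (by positivity)))
  have hlim : Tendsto (fun n : ℕ => (1 / ((n : ℝ) + 1)) • u₀ - p) atTop (𝓝 (-p)) := by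
    have h0 := tendsto_one_div_add_atTop_nhds_zero_nat (𝕜 := ℝ)
    simpa using (h0.smul_const u₀).sub_const p
  exact Q.P_closed.mem_of_tendsto hlim (Eventually.of_forall hmem)

lemma eq_of_forall_d_lt'_s15 (Q : QCMS X E) {a b : X}
    (h : ∀ u ∈ interior Q.P, Q.lt' (Q.d a b) u) : a = b :=
  (Q.d_eq_zero_iff a b).mp (Q.P_eq_zero _ (Q.d_mem a b) (Q.neg_mem_of_forall_lt'_s15 h))

lemma fConv_iff_eventually (Q : QCMS X E) {x : ℕ → X} {a : X} :
    Q.FConv x a ↔ ∀ u ∈ interior Q.P, ∀ᶠ n in atTop, Q.lt' (Q.d a (x n)) u := by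
  simp only [FConv, eventually_atTop]

lemma bConv_iff_eventually (Q : QCMS X E) {x : ℕ → X} {a : X} :
    Q.BConv x a ↔ ∀ u ∈ interior Q.P, ∀ᶠ n in atTop, Q.lt' (Q.d (x n) a) u := by
  simp only [BConv, eventually_atTop]

lemma BConv.comp_strictMono {Q : QCMS X E} {x : ℕ → X} {a : X} (h : Q.BConv x a)
    {φ : ℕ → ℕ} (hφ : StrictMono φ) : Q.BConv (x ∘ φ) a := by
  rw [bConv_iff_eventually] at h ⊢
  exact fun u hu => hφ.tendsto_atTop.eventually (h u hu)

lemma eq_of_fConv_of_bConv (Q : QCMS X E) {y : ℕ → X} {a b : X} (hF : Q.FConv y b)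
    (hB : Q.BConv y a) : b = a := by
  rw [fConv_iff_eventually] at hF
  rw [bConv_iff_eventually] at hB
  refine Q.eq_of_forall_d_lt'_s15 fun u hu => ?_
  have hv : (1 / 2 : ℝ) • u ∈ interior Q.P := Q.smul_mem_interior_s15 hu (by norm_num)
  obtain ⟨n, hbn, hna⟩ := ((hF _ hv).and (hB _ hv)).exists
  have hu2 : (1 / 2 : ℝ) • u + (1 / 2 : ℝ) • u = u := by rw [← add_smul]; norm_num
  simpa only [hu2] using Q.lt'_add_of_triangle hbn hna

lemma exists_strictMono_not_lt'_of_not_fConv (Q : QCMS X E) {x : ℕ → X} {a : X}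
    (h : ¬Q.FConv x a) :
    ∃ u ∈ interior Q.P, ∃ φ : ℕ → ℕ, StrictMono φ ∧
      ∀ k, ¬Q.lt' (Q.d a (x (φ k))) u := by
  simp only [fConv_iff_eventually, not_forall, not_eventually, exists_prop] at h
  obtain ⟨u, hu, hfreq⟩ := h
  exact ⟨u, hu, extraction_of_frequently_atTop hfreq⟩

end QCMS

/-- in a forward sequentially compact space, backward convergence implies
forward convergence. -/
theorem forward_of_backward_conv {X E : Type*} [NormedAddCommGroup E] [NormedSpace ℝ E]
    (Q : QCMS X E) (hsc : Q.FSeqCompact) :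
    ∀ (x : ℕ → X) (a : X), Q.BConv x a → Q.FConv x a := by
  intro x a hB
  by_contra hF
  obtain ⟨u, hu, φ, hφ, hfar⟩ := Q.exists_strictMono_not_lt'_of_not_fConv hF
  obtain ⟨b, ψ, hψ, hbF⟩ := hsc (x ∘ φ)
  obtain rfl : b = a :=
    Q.eq_of_fConv_of_bConv hbF ((hB.comp_strictMono hφ).comp_strictMono hψ)
  obtain ⟨N, hN⟩ := hbF u hu
  exact hfar (ψ N) (hN N le_rfl)
end
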